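/- For all nonnegative integers r, s and every complex number a such that a ≠ 1, (2−a−r)_k ≠ 0 for 0 ≤ k ≤ r, and (a)_s ≠ 0, one has Σ_{k=0}^{r} (−r)_k (1+k)_s / ((2−a−r)_k · s!) = ((a+r−1)/(a−1)) · (a+r)_s / (a)_s. -/
import Mathlib


/-- The Pochhammer symbol (rising factorial) `(a)ₖ = a(a+1)⋯(a+k−1)`. -/
noncomputable def poch (a : ℂ) (k : ℕ) : ℂ := (ascPochhammer ℂ k).eval a

lemma poch_zero (a : ℂ) : poch a 0 = 1 := by simp [poch]

lemma poch_succ_right (a : ℂ) (n : ℕ) : poch a (n + 1) = poch a n * (a + n) := by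
  simp [poch, ascPochhammer_succ_right, Polynomial.eval_mul]

lemma poch_succ_left (a : ℂ) (n : ℕ) : poch a (n + 1) = a * poch (a + 1) n := by
  simp [poch, ascPochhammer_succ_left, Polynomial.eval_comp]

lemma poch_one (n : ℕ) : poch 1 n = n.factorial := by
  simp [poch, ascPochhammer_eval_one]

lemma poch_add (a : ℂ) (n m : ℕ) : poch a (n + m) = poch a n * poch (a + n) m := by
  induction m with
  | zero => simp [poch_zero]
  | succ m ih => rw [← add_assoc, poch_succ_right, ih, poch_succ_right]; push_cast; ring

lemma poch_reflect (x : ℂ) (n : ℕ) : poch x n = (-1) ^ n * poch (1 - n - x) n := by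
  induction n with
  | zero => simp [poch_zero]
  | succ n ih =>
    rw [poch_succ_right, ih, poch_succ_left]
    have : (1 : ℂ) - (n + 1 : ℕ) - x + 1 = 1 - n - x := by push_cast; ring
    rw [this]
    push_cast; ring

/-- Terminating Chu–Vandermonde identity in denominator-free (polynomial) form. -/
lemma chu_vandermonde (r : ℕ) : ∀ b c : ℂ,
    ∑ k ∈ Finset.range (r + 1),
      (-1 : ℂ) ^ k * (r.choose k) * poch b k * poch (c + k) (r - k) = poch (c - b) r := by
  induction r with
  | zero => intro b c; simp [poch_zero]
  | succ r ih =>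
    intro b c
    set f : ℕ → ℂ := fun k =>
      (-1 : ℂ) ^ k * ((r + 1).choose k) * poch b k * poch (c + k) (r + 1 - k) with hf
    set G : ℕ → ℂ := fun k =>
      (-1 : ℂ) ^ k * (r.choose k) * poch b k * poch (c + k) (r + 1 - k) with hG
    set st : ℕ → ℂ := fun k =>
      (-1 : ℂ) ^ k * (r.choose k) * poch b (k + 1) * poch (c + k + 1) (r - k) with hst
    have step1 : ∑ k ∈ Finset.range (r + 1 + 1), f k
        = ∑ i ∈ Finset.range (r + 1), f (i + 1) + f 0 := Finset.sum_range_succ' f _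
    have step2 : ∀ i, f (i + 1) = -st i + G (i + 1) := by
      intro i
      simp only [hf, hG, hst, Nat.choose_succ_succ, Nat.succ_sub_succ, Nat.succ_eq_add_one,
        Nat.add_comm 1]
      push_cast
      rw [poch_succ_right b i]
      ring
    have step3 : ∑ i ∈ Finset.range (r + 1), G (i + 1) + f 0
        = ∑ k ∈ Finset.range (r + 1), G k := by
      have h0 : f 0 = G 0 := by simp [hf, hG]
      rw [h0, ← Finset.sum_range_succ' G (r + 1), Finset.sum_range_succ]
      simp [hG, Nat.choose_succ_self]
    have step4 : ∀ k ∈ Finset.range (r + 1), G k - st k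
        = (c - b) * ((-1 : ℂ) ^ k * (r.choose k) * poch b k * poch ((c + 1) + k) (r - k)) := by
      intro k hk
      have hk' : k ≤ r := Nat.lt_succ_iff.mp (Finset.mem_range.mp hk)
      have h1 : r + 1 - k = (r - k) + 1 := by omega
      have h2 : (c : ℂ) + 1 + k = c + k + 1 := by ring
      simp only [hG, hst, h1, h2]
      rw [poch_succ_left (c + ↑k) (r - k), poch_succ_right b k]
      ring
    calc ∑ k ∈ Finset.range (r + 1 + 1), f k
        = ∑ i ∈ Finset.range (r + 1), (-st i + G (i + 1)) + f 0 := by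
          rw [step1]; congr 1; exact Finset.sum_congr rfl fun i _ => step2 i
      _ = ∑ k ∈ Finset.range (r + 1), (G k - st k) := by
          rw [Finset.sum_add_distrib, add_assoc, step3, Finset.sum_sub_distrib]
          ring_nf
          rw [Finset.sum_neg_distrib]
          ring
      _ = ∑ k ∈ Finset.range (r + 1),
            (c - b) * ((-1 : ℂ) ^ k * (r.choose k) * poch b k * poch ((c + 1) + k) (r - k)) :=
          Finset.sum_congr rfl step4
      _ = (c - b) * poch ((c + 1) - b) r := by rw [← Finset.mul_sum, ih b (c + 1)]
      _ = poch (c - b) (r + 1) := by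
          rw [poch_succ_left]
          congr 1
          ring

lemma poch_one_add (k s : ℕ) :
    poch (1 + (k : ℂ)) s * (k.factorial : ℂ) = ((k + s).factorial : ℂ) := by
  have h := poch_add 1 k s
  rw [poch_one, poch_one] at h
  linear_combination -h

lemma poch_neg_nat (r k : ℕ) (hk : k ≤ r) :
    poch (-(r : ℂ)) k * ((r - k).factorial : ℂ) = (-1 : ℂ) ^ k * (r.factorial : ℂ) := by
  have hr : poch (-(r:ℂ)) k = (-1)^k * poch (1 - k - (-(r:ℂ))) k := poch_reflect _ k
  have harg : (1 : ℂ) - k - (-(r:ℂ)) = 1 + ((r - k : ℕ) : ℂ) := by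
    push_cast [Nat.cast_sub hk]; ring
  have hsplit := poch_add 1 (r - k) k
  rw [poch_one, show (r - k) + k = r from by omega, poch_one] at hsplit
  rw [hr, harg]
  have h2 : poch (1 + ((r - k : ℕ) : ℂ)) k * ((r - k).factorial : ℂ) = (r.factorial : ℂ) := by
    rw [hsplit]; ring
  linear_combination ((-1:ℂ)^k) * h2

theorem finite_sum_inverse_argument' (r s : ℕ) (a : ℂ) (ha : a ≠ 1)
    (h1 : ∀ k ≤ r, poch (2 - a - r) k ≠ 0) (h2 : poch a s ≠ 0) :
    ∑ k ∈ Finset.range (r + 1),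
      poch (-(r : ℂ)) k * poch (1 + k) s / (poch (2 - a - r) k * (s.factorial : ℂ)) =
    ((a + r - 1) / (a - 1)) * (poch (a + r) s / poch a s) := by
  set c : ℂ := 2 - a - (r : ℂ) with hc
  have hcr : poch c r ≠ 0 := h1 r le_rfl
  have ha1 : a - 1 ≠ 0 := sub_ne_zero.mpr ha
  -- key termwise numerator identity
  have key : ∀ k, k ≤ r → poch (-(r : ℂ)) k * poch (1 + (k:ℂ)) s
      = (-1 : ℂ) ^ k * (r.choose k) * poch (1 + (s:ℂ)) k * (s.factorial : ℂ) := by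
    intro k hk
    have hkf : ((r - k).factorial : ℂ) * (k.factorial : ℂ) ≠ 0 := by
      exact_mod_cast mul_ne_zero (Nat.cast_ne_zero.mpr (r-k).factorial_ne_zero)
        (Nat.cast_ne_zero.mpr k.factorial_ne_zero)
    apply mul_right_cancel₀ hkf
    have e1 : poch (1 + (k:ℂ)) s * (k.factorial : ℂ) = ((k + s).factorial : ℂ) :=
      poch_one_add k s
    have e2 : poch (1 + (s:ℂ)) k * (s.factorial : ℂ) = ((s + k).factorial : ℂ) :=
      poch_one_add s k
    have e3 : poch (-(r : ℂ)) k * ((r - k).factorial : ℂ) = (-1 : ℂ) ^ k * (r.factorial : ℂ) :=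
      poch_neg_nat r k hk
    have e4 : (r.factorial : ℂ) = (r.choose k) * (k.factorial : ℂ) * ((r - k).factorial : ℂ) := by
      exact_mod_cast (Nat.choose_mul_factorial_mul_factorial hk).symm
    have e5 : ((k + s).factorial : ℂ) = ((s + k).factorial : ℂ) := by rw [Nat.add_comm]
    calc poch (-(r : ℂ)) k * poch (1 + (k:ℂ)) s * (((r - k).factorial : ℂ) * (k.factorial : ℂ))
        = (poch (-(r : ℂ)) k * ((r - k).factorial : ℂ)) * (poch (1 + (k:ℂ)) s * (k.factorial : ℂ)) := by ring
      _ = ((-1 : ℂ) ^ k * (r.factorial : ℂ)) * ((s + k).factorial : ℂ) := by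
          rw [e1, e3, e5]
      _ = ((-1 : ℂ) ^ k * ((r.choose k) * (k.factorial : ℂ) * ((r - k).factorial : ℂ)))
            * (poch (1 + (s:ℂ)) k * (s.factorial : ℂ)) := by rw [← e4, e2]
      _ = (-1 : ℂ) ^ k * (r.choose k) * poch (1 + (s:ℂ)) k * (s.factorial : ℂ)
            * (((r - k).factorial : ℂ) * (k.factorial : ℂ)) := by ring
  -- termwise: each summand equals numerator / poch c r
  have term_eq : ∀ k ∈ Finset.range (r + 1),
      poch (-(r : ℂ)) k * poch (1 + (k:ℂ)) s / (poch c k * (s.factorial : ℂ))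
      = ((-1 : ℂ) ^ k * (r.choose k) * poch (1 + (s:ℂ)) k * poch (c + k) (r - k)) / poch c r := by
    intro k hk
    have hk' : k ≤ r := Nat.lt_succ_iff.mp (Finset.mem_range.mp hk)
    have hck : poch c k ≠ 0 := h1 k hk'
    have hsf : (s.factorial : ℂ) ≠ 0 := Nat.cast_ne_zero.mpr s.factorial_ne_zero
    have hsplit : poch c r = poch c k * poch (c + k) (r - k) := by
      have h := poch_add c k (r - k)
      rwa [show k + (r - k) = r from by omega] at h
    rw [div_eq_div_iff (mul_ne_zero hck hsf) hcr, hsplit]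
    linear_combination (poch c k * poch (c + (k:ℂ)) (r - k)) * key k hk'
  -- sum the numerators with Chu–Vandermonde
  have hsum : ∑ k ∈ Finset.range (r + 1),
      poch (-(r : ℂ)) k * poch (1 + (k:ℂ)) s / (poch c k * (s.factorial : ℂ))
      = poch (c - (1 + (s:ℂ))) r / poch c r := by
    rw [Finset.sum_congr rfl term_eq, ← Finset.sum_div, chu_vandermonde r (1 + (s:ℂ)) c]
  rw [hsum]
  -- reflection
  have refl1 : poch (c - (1 + (s:ℂ))) r = (-1 : ℂ) ^ r * poch (a + s) r := by
    rw [poch_reflect (c - (1 + (s:ℂ))) r]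
    congr 2
    rw [hc]; ring
  have refl2 : poch c r = (-1 : ℂ) ^ r * poch (a - 1) r := by
    rw [poch_reflect c r]
    congr 2
    rw [hc]; ring
  have har : poch (a - 1) r ≠ 0 := by
    intro h
    rw [refl2, h, mul_zero] at hcr
    exact hcr rfl
  rw [refl1, refl2]
  have hneg : ((-1 : ℂ) ^ r) ≠ 0 := by
    simp
  rw [mul_div_mul_left _ _ hneg]
  -- final rational identity
  rw [div_mul_div_comm, div_eq_div_iff har (mul_ne_zero ha1 h2)]
  have A1 : poch a (s + r) = poch a s * poch (a + s) r := poch_add a s r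
  have A2 : poch a (r + s) = poch a r * poch (a + r) s := poch_add a r s
  have A3 : poch (a - 1) (r + 1) = poch (a - 1) r * (a - 1 + r) := poch_succ_right _ r
  have A4 : poch (a - 1) (r + 1) = (a - 1) * poch a r := by
    rw [poch_succ_left]
    congr 2
    ring
  have A5 : poch a (s + r) = poch a (r + s) := by rw [Nat.add_comm]
  linear_combination (a - 1) * A5 - (a - 1) * A1 + (a - 1) * A2
    - poch (a + r) s * A4 + poch (a + r) s * A3
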